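/- For every positive integer m there exist real numbers a_0, …, a_{2m} such that the trigonometric polynomial b(t) = Σ_{k=0}^{2m} a_k e^{−ikt} satisfies b(0) = 1 and |b(t)|² = 1 − sin^{2m}(t) for all t ∈ ℝ. -/

import Mathlib

open Complex Real BigOperators

noncomputable section

open Polynomial Finset in
private lemma aux_root_prod (n : ℕ) (hn : 0 < n) {ζ : ℂ} (hζ : IsPrimitiveRoot ζ n) (z : ℂ) :
    ∏ j ∈ Finset.range n, (z - ζ^j) = z^n - 1 := by
  have := X_pow_sub_C_eq_prod hζ hn (one_pow n)
  have h2 := congrArg (Polynomial.eval z) this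
  simp only [eval_sub, eval_pow, eval_X, eval_one, eval_prod, eval_C, mul_one] at h2
  exact h2.symm

private lemma aux_one_sub_prod (n : ℕ) (hn : 0 < n) {ζ : ℂ} (hζ : IsPrimitiveRoot ζ n)
    (z : ℂ) : ∏ j ∈ Finset.range n, (1 - ζ^j * z) = 1 - z^n := by
  rcases eq_or_ne z 0 with rfl | hz
  · simp [hn.ne']
  · have h1 := aux_root_prod n hn hζ z⁻¹
    have key : z^n * ∏ j ∈ Finset.range n, (z⁻¹ - ζ^j)
        = ∏ j ∈ Finset.range n, (1 - ζ^j * z) := by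
      calc z^n * ∏ j ∈ Finset.range n, (z⁻¹ - ζ^j)
          = ∏ j ∈ Finset.range n, (z * (z⁻¹ - ζ^j)) := by
            rw [Finset.prod_mul_distrib, Finset.prod_const, Finset.card_range]
        _ = ∏ j ∈ Finset.range n, (1 - ζ^j * z) := by
            refine Finset.prod_congr rfl fun j _ => ?_
            field_simp
    rw [← key, h1, inv_pow, mul_sub, mul_inv_cancel₀ (pow_ne_zero n hz), mul_one]

private lemma aux_cos_factorization (m : ℕ) (hm : 1 ≤ m) (x : ℂ) :
    (1 - x^2) * ∏ k ∈ Finset.Ico 1 m, (1 - 2*((Real.cos (k*π/m) : ℝ) : ℂ)*x + x^2)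
      = 1 - x^(2*m) := by
  have hm0 : (m : ℂ) ≠ 0 := Nat.cast_ne_zero.2 (by omega)
  set ω : ℂ := Complex.exp (π * I / m) with hω
  have hprim : IsPrimitiveRoot ω (2*m) := by
    have := Complex.isPrimitiveRoot_exp (2*m) (by omega)
    convert this using 2
    push_cast
    field_simp
  have hωk : ∀ k : ℕ, ω ^ k = Complex.exp (k * π * I / m) := by
    intro k
    rw [hω, ← Complex.exp_nat_mul]
    ring_nf
  have key := aux_one_sub_prod (2*m) (by omega) hprim x
  set f : ℕ → ℂ := fun j => 1 - ω^j * x with hf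
  have h0 : f 0 = 1 - x := by simp [hf]
  have hmm : f m = 1 + x := by
    rw [hf]
    simp only
    rw [hωk m]
    rw [show (m:ℂ) * π * I / m = π * I by field_simp, Complex.exp_pi_mul_I]
    ring
  have hsplit : ∏ j ∈ Finset.range (2*m), f j
      = f 0 * ((∏ k ∈ Finset.Ico 1 m, f k) * (f m * ∏ j ∈ Finset.Ico (m+1) (2*m), f j)) := by
    rw [Finset.range_eq_Ico, Finset.prod_eq_prod_Ico_succ_bot (by omega : 0 < 2*m),
      ← Finset.prod_Ico_consecutive f (by omega : 1 ≤ m) (by omega : m ≤ 2*m),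
      Finset.prod_eq_prod_Ico_succ_bot (by omega : m < 2*m)]
  have hrefl : ∏ j ∈ Finset.Ico (m+1) (2*m), f j
      = ∏ k ∈ Finset.Ico 1 m, f (2*m - k) := by
    refine (Finset.prod_nbij' (fun j => 2*m - j) (fun k => 2*m - k) ?_ ?_ ?_ ?_
      (fun a ha => rfl)).symm <;>
      (intro a ha; simp only [Finset.mem_Ico] at *; omega)
  have hpair : ∀ k ∈ Finset.Ico 1 m, f k * f (2*m - k)
      = 1 - 2*((Real.cos (k*π/m) : ℝ) : ℂ)*x + x^2 := by
    intro k hk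
    simp only [Finset.mem_Ico] at hk
    rw [hf]
    simp only
    rw [hωk k, hωk (2*m - k)]
    have hc : (((2:ℕ)*m - k : ℕ) : ℂ) = 2*(m:ℂ) - k := by
      push_cast [Nat.cast_sub (by omega : k ≤ 2*m)]; ring
    rw [hc]
    have he2 : Complex.exp ((2*(m:ℂ) - k) * π * I / m)
        = Complex.exp (-((k:ℂ) * π / m) * I) := by
      rw [show (2*(m:ℂ) - k) * π * I / m = 2*π*I + (-((k:ℂ) * π / m) * I) by
        field_simp; ring, Complex.exp_add, Complex.exp_two_pi_mul_I, one_mul]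
    rw [he2]
    have hcos : Complex.exp ((k:ℂ) * π * I / m) + Complex.exp (-((k:ℂ) * π / m) * I)
        = 2 * ((Real.cos (k*π/m) : ℝ) : ℂ) := by
      rw [Complex.ofReal_cos]
      push_cast
      rw [Complex.two_cos]
      ring_nf
    have hmul : Complex.exp ((k:ℂ) * π * I / m) * Complex.exp (-((k:ℂ) * π / m) * I)
        = 1 := by
      rw [← Complex.exp_add]
      rw [show (k:ℂ) * π * I / m + -((k:ℂ) * π / m) * I = 0 by field_simp; ring]
      exact Complex.exp_zero
    linear_combination (x^2) * hmul - x * hcos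
  rw [hsplit, h0, hmm, hrefl] at key
  have hc : (∏ k ∈ Finset.Ico 1 m, f k) * ∏ k ∈ Finset.Ico 1 m, f (2*m - k)
      = ∏ k ∈ Finset.Ico 1 m, (1 - 2*((Real.cos (k*π/m) : ℝ) : ℂ)*x + x^2) := by
    rw [← Finset.prod_mul_distrib]
    exact Finset.prod_congr rfl hpair
  calc (1 - x^2) * ∏ k ∈ Finset.Ico 1 m, (1 - 2*((Real.cos (k*π/m) : ℝ) : ℂ)*x + x^2)
      = (1 - x) * ((∏ k ∈ Finset.Ico 1 m, f k)
          * ((1 + x) * ∏ k ∈ Finset.Ico 1 m, f (2*m - k))) := by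
        rw [← hc]; ring
    _ = 1 - x^(2*m) := key

private lemma aux_pair_factorization (m : ℕ) (hm : 1 ≤ m) (x : ℂ) :
    ∏ k ∈ Finset.Ico 1 m, (1 - 2*((Real.cos (k*π/m) : ℝ) : ℂ)*x + x^2)
      = (∏ k ∈ Finset.Ico 1 ((m-1)/2 + 1),
          ((1-x^2)^2 + 4*((Real.sin (k*π/m) : ℝ) : ℂ)^2*x^2))
        * (if Even m then 1 + x^2 else 1) := by
  have hm0 : (m : ℝ) ≠ 0 := Nat.cast_ne_zero.2 (by omega)
  set q : ℕ → ℂ := fun k => 1 - 2*((Real.cos (k*π/m) : ℝ) : ℂ)*x + x^2 with hq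
  set Q : ℕ → ℂ := fun k => (1-x^2)^2 + 4*((Real.sin (k*π/m) : ℝ) : ℂ)^2*x^2 with hQ
  have hpair : ∀ k, 1 ≤ k → k ≤ m → q k * q (m - k) = Q k := by
    intro k hk1 hk2
    have hcast : ((m - k : ℕ) : ℝ) = (m : ℝ) - k := by
      push_cast [Nat.cast_sub hk2]; ring
    have hcos : Real.cos (((m - k : ℕ) : ℝ)*π/m) = - Real.cos (k*π/m) := by
      rw [hcast, show ((m:ℝ) - k)*π/m = π - k*π/m by field_simp, Real.cos_pi_sub]
    have hsc : ((Real.sin (k*π/m) : ℝ) : ℂ)^2 + ((Real.cos (k*π/m) : ℝ) : ℂ)^2 = 1 := by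
      exact_mod_cast Real.sin_sq_add_cos_sq (k*π/m)
    rw [hq, hQ]
    simp only [hcos, Complex.ofReal_neg]
    linear_combination (-4*x^2) * hsc
  rcases Nat.even_or_odd m with he | ho
  · obtain ⟨hh, rfl⟩ := he
    have hh1 : 1 ≤ hh := by omega
    obtain ⟨h, rfl⟩ : ∃ h, hh = h + 1 := ⟨hh - 1, by omega⟩
    set m := (h+1) + (h+1) with hmdef
    have hhalf : (m - 1)/2 = h := by omega
    rw [hhalf, if_pos (by exact ⟨h+1, rfl⟩)]
    have hmid : q (h+1) = 1 + x^2 := by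
      rw [hq]
      simp only
      rw [show ((h+1:ℕ):ℝ)*π/m = π/2 by push_cast [hmdef]; field_simp; ring]
      simp [Real.cos_pi_div_two]
    have hsplit : ∏ k ∈ Finset.Ico 1 m, q k
        = (∏ k ∈ Finset.Ico 1 (h+1), q k)
          * (q (h+1) * ∏ j ∈ Finset.Ico (h+2) m, q j) := by
      rw [← Finset.prod_Ico_consecutive q (by omega : 1 ≤ h+1) (by omega : h+1 ≤ m),
        Finset.prod_eq_prod_Ico_succ_bot (by omega : h+1 < m)]
    have hrefl : ∏ j ∈ Finset.Ico (h+2) m, q j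
        = ∏ k ∈ Finset.Ico 1 (h+1), q (m - k) := by
      refine (Finset.prod_nbij' (fun j => m - j) (fun k => m - k) ?_ ?_ ?_ ?_
        (fun a ha => rfl)).symm <;>
        (intro a ha; simp only [Finset.mem_Ico] at *; omega)
    rw [hsplit, hrefl]
    have hcomb : (∏ k ∈ Finset.Ico 1 (h+1), q k) * ∏ k ∈ Finset.Ico 1 (h+1), q (m - k)
        = ∏ k ∈ Finset.Ico 1 (h+1), Q k := by
      rw [← Finset.prod_mul_distrib]
      refine Finset.prod_congr rfl fun k hk => ?_
      simp only [Finset.mem_Ico] at hk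
      exact hpair k hk.1 (by omega)
    rw [← hcomb, hmid]
    ring
  · obtain ⟨h, rfl⟩ := ho
    set m := 2*h + 1 with hmdef
    have hhalf : (m - 1)/2 = h := by omega
    rw [hhalf, if_neg (by simp [hmdef, parity_simps])]
    have hsplit : ∏ k ∈ Finset.Ico 1 m, q k
        = (∏ k ∈ Finset.Ico 1 (h+1), q k) * ∏ j ∈ Finset.Ico (h+1) m, q j := by
      rw [← Finset.prod_Ico_consecutive q (by omega : 1 ≤ h+1) (by omega : h+1 ≤ m)]
    have hrefl : ∏ j ∈ Finset.Ico (h+1) m, q j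
        = ∏ k ∈ Finset.Ico 1 (h+1), q (m - k) := by
      refine (Finset.prod_nbij' (fun j => m - j) (fun k => m - k) ?_ ?_ ?_ ?_
        (fun a ha => rfl)).symm <;>
        (intro a ha; simp only [Finset.mem_Ico] at *; omega)
    rw [hsplit, hrefl, ← Finset.prod_mul_distrib, mul_one]
    refine Finset.prod_congr rfl fun k hk => ?_
    simp only [Finset.mem_Ico] at hk
    exact hpair k hk.1 (by omega)

private lemma aux_L0 (u v x : ℂ) (huv : u*v = 1) (hx2 : 4*x^2 = -(u-v)^2) :
    (1/2 + 1/2*u^2) * (1/2 + 1/2*v^2) = 1 - x^2 := by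
  linear_combination ((u*v+3)/4) * huv + (1/4) * hx2

private lemma aux_Lk (s u v x : ℂ) (huv : u*v = 1) (hx2 : 4*x^2 = -(u-v)^2) :
    (1/4 + s*u + 1/2*u^2 - s*u^3 + 1/4*u^4) * (1/4 + s*v + 1/2*v^2 - s*v^3 + 1/4*v^4)
      = (1-x^2)^2 + 4*s^2*x^2 := by
  linear_combination (15/16 - (1/4)*v*s + (3/8)*v^2 - v^2*s^2 + (1/4)*v^3*s - (1/4)*u*s
    - (1/16)*u*v + u*v*s^2 - (3/4)*u*v^2*s + (1/8)*u*v^3 + (3/8)*u^2 - u^2*s^2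
    - (3/4)*u^2*v*s + (1/16)*u^2*v^2 + u^2*v^2*s^2 - (1/4)*u^2*v^3*s + (1/4)*u^3*s
    + (1/8)*u^3*v - (1/4)*u^3*v^2*s + (1/16)*u^3*v^3) * huv
    + (1/2 - (1/4)*x^2 - s^2 + (1/16)*v^2 - (1/8)*u*v + (1/16)*u^2) * hx2

private lemma aux_Lm' (a c u v x : ℂ) (hac : a*c = -(1/4)) (haa : a^2 + c^2 = 3/2)
    (huv : u*v = 1) (hx2 : 4*x^2 = -(u-v)^2) :
    (a + c*u^2) * (a + c*v^2) = 1 + x^2 := by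
  linear_combination haa + (u^2+v^2)*hac + (c^2*(u*v+1) - 1/2)*huv - (1/4)*hx2

/-- For every positive integer `m` there are real numbers `a_0, …, a_{2m}` such that
the trigonometric polynomial `b(t) = Σ_{k=0}^{2m} a_k e^{-ikt}` satisfies `b(0) = 1`
and `|b(t)|² = 1 - sin^{2m}(t)` for all `t ∈ ℝ`. -/
theorem sqrt_one_sub_sin_pow (m : ℕ) (hm : 1 ≤ m) :
    ∃ a : ℕ → ℝ,
      (∑ k ∈ Finset.range (2 * m + 1),
          (a k : ℂ) * Complex.exp (-Complex.I * (k : ℂ) * ((0 : ℝ) : ℂ))) = 1 ∧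
      ∀ t : ℝ,
        (‖(∑ k ∈ Finset.range (2 * m + 1),
            (a k : ℂ) * Complex.exp (-Complex.I * (k : ℂ) * (t : ℂ)))‖) ^ 2
          = 1 - Real.sin t ^ (2 * m) := by
  classical
  set h : ℕ := (m-1)/2 with hh
  set sR : ℕ → ℝ := fun k => Real.sin (k*π/m) with hsR
  set F0 : Polynomial ℝ := Polynomial.C (1/2) + Polynomial.C (1/2) * Polynomial.X^2
    with hF0def
  set G : ℕ → Polynomial ℝ := fun k =>
    Polynomial.C (1/4) + Polynomial.C (sR k) * Polynomial.X
      + Polynomial.C (1/2) * Polynomial.X^2 - Polynomial.C (sR k) * Polynomial.X^3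
      + Polynomial.C (1/4) * Polynomial.X^4 with hGdef
  set M : Polynomial ℝ := if Even m then
      Polynomial.C ((1+Real.sqrt 2)/2) + Polynomial.C ((1-Real.sqrt 2)/2) * Polynomial.X^2
    else 1 with hMdef
  set P : Polynomial ℝ := F0 * (∏ k ∈ Finset.Ico 1 (h+1), G k) * M with hPdef
  -- degree bound
  have hdegF0 : F0.natDegree ≤ 2 := by
    rw [hF0def]; compute_degree!
  have hdegG : ∀ k ∈ Finset.Ico 1 (h+1), (G k).natDegree ≤ 4 := by
    intro k _; simp only [hGdef]; compute_degree!
  have hdegprod : (∏ k ∈ Finset.Ico 1 (h+1), G k).natDegree ≤ 4 * h := by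
    refine le_trans (Polynomial.natDegree_prod_le _ _) ?_
    have := Finset.sum_le_card_nsmul (Finset.Ico 1 (h+1)) (fun k => (G k).natDegree) 4 hdegG
    simpa [Nat.card_Ico, mul_comm] using this
  have hdegM : M.natDegree ≤ if Even m then 2 else 0 := by
    rw [hMdef]
    split_ifs
    · compute_degree!
    · simp
  have hdeg : P.natDegree < 2*m + 1 := by
    have h1 : P.natDegree ≤ F0.natDegree + (∏ k ∈ Finset.Ico 1 (h+1), G k).natDegree
        + M.natDegree := by
      rw [hPdef]
      exact le_trans (Polynomial.natDegree_mul_le)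
        (by gcongr; exact Polynomial.natDegree_mul_le)
    rcases Nat.even_or_odd m with he | ho
    · obtain ⟨j, rfl⟩ := he
      rw [if_pos ⟨j, rfl⟩] at hdegM
      omega
    · obtain ⟨j, rfl⟩ := ho
      rw [if_neg (by simp [parity_simps])] at hdegM
      omega
  set Pc : Polynomial ℂ := P.map (algebraMap ℝ ℂ) with hPc
  have hdegc : Pc.natDegree < 2*m+1 :=
    lt_of_le_of_lt (Polynomial.natDegree_map_le) hdeg
  have hsum : ∀ t : ℝ, (∑ k ∈ Finset.range (2*m+1),
      ((P.coeff k : ℝ) : ℂ) * Complex.exp (-Complex.I * k * (t:ℂ)))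
      = Pc.eval (Complex.exp (-Complex.I * t)) := by
    intro t
    rw [Polynomial.eval_eq_sum_range' hdegc]
    refine Finset.sum_congr rfl fun k _ => ?_
    rw [hPc, Polynomial.coeff_map, ← Complex.exp_nat_mul,
      show (k:ℂ) * (-Complex.I * t) = -Complex.I * k * t by ring]
    norm_num
  refine ⟨fun k => P.coeff k, ?_, ?_⟩
  · rw [hsum 0]
    have h1 : Complex.exp (-Complex.I * ((0:ℝ):ℂ)) = 1 := by
      simp
    rw [h1]
    have hPeval : P.eval 1 = 1 := by
      rw [hPdef]
      simp only [Polynomial.eval_mul, Polynomial.eval_prod]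
      have e0 : F0.eval 1 = 1 := by
        simp [hF0def]; norm_num
      have eG : ∀ k ∈ Finset.Ico 1 (h+1), (G k).eval 1 = 1 := by
        intro k _
        simp [hGdef]; ring
      have eM : M.eval 1 = 1 := by
        rw [hMdef]
        split_ifs
        · simp; ring
        · simp
      rw [e0, Finset.prod_congr rfl eG, eM, Finset.prod_const_one]
      norm_num
    rw [hPc, Polynomial.eval_one_map, hPeval, map_one]
  · intro t
    rw [hsum t]
    set u : ℂ := Complex.exp (-Complex.I * t) with hu
    set v : ℂ := Complex.exp (Complex.I * t) with hv
    set x : ℂ := ((Real.sin t : ℝ) : ℂ) with hx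
    have huv : u * v = 1 := by
      rw [hu, hv, ← Complex.exp_add]
      simp
    have hune : u ≠ 0 := Complex.exp_ne_zero _
    have h2s : 2 * x = (u - v) * Complex.I := by
      rw [hx, Complex.ofReal_sin, Complex.two_sin, hu, hv]
      congr 2 <;> ring_nf
    have hx2 : 4 * x^2 = -(u - v)^2 := by
      have hI : Complex.I^2 = -1 := Complex.I_sq
      linear_combination (2*x + (u-v)*Complex.I) * h2s + (u-v)^2 * hI
    -- conjugate of the evaluation
    have hconj : (starRingEnd ℂ) (Pc.eval u) = Pc.eval v := by
      rw [hPc, Polynomial.eval_map, Polynomial.eval_map, Polynomial.hom_eval₂]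
      congr 1
      · exact RingHom.ext fun r => by simp [Complex.conj_ofReal]
      · rw [hu, hv, ← Complex.exp_conj]
        congr 1
        simp [Complex.conj_ofReal]
    have hfact : ∀ w : ℂ, Pc.eval w = (1/2 + 1/2*w^2)
        * (∏ k ∈ Finset.Ico 1 (h+1),
            (1/4 + ((sR k : ℝ):ℂ)*w + 1/2*w^2 - ((sR k : ℝ):ℂ)*w^3 + 1/4*w^4))
        * (if Even m then ((((1+Real.sqrt 2)/2 : ℝ)):ℂ) + (((1-Real.sqrt 2)/2 : ℝ):ℂ)*w^2
            else 1) := by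
      intro w
      rw [hPc, hPdef]
      simp only [hF0def, hGdef, hMdef, apply_ite (Polynomial.map (algebraMap ℝ ℂ)),
        Polynomial.map_mul, Polynomial.map_add, Polynomial.map_sub, Polynomial.map_pow,
        Polynomial.map_prod, Polynomial.map_one, Polynomial.map_C, Polynomial.map_X,
        apply_ite (Polynomial.eval w),
        Polynomial.eval_mul, Polynomial.eval_add, Polynomial.eval_sub, Polynomial.eval_pow,
        Polynomial.eval_prod, Polynomial.eval_one, Polynomial.eval_C, Polynomial.eval_X,
        Complex.coe_algebraMap]
      push_cast
      norm_num
    have hmain : (Pc.eval u) * (starRingEnd ℂ) (Pc.eval u)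
        = ((1 - Real.sin t ^ (2*m) : ℝ) : ℂ) := by
      rw [hconj, hfact u, hfact v]
      have e0 : (1/2 + 1/2*u^2) * (1/2 + 1/2*v^2) = 1 - x^2 := aux_L0 u v x huv hx2
      have eG : ∀ k ∈ Finset.Ico 1 (h+1),
          (1/4 + ((sR k : ℝ):ℂ)*u + 1/2*u^2 - ((sR k : ℝ):ℂ)*u^3 + 1/4*u^4)
          * (1/4 + ((sR k : ℝ):ℂ)*v + 1/2*v^2 - ((sR k : ℝ):ℂ)*v^3 + 1/4*v^4)
          = (1-x^2)^2 + 4*((sR k : ℝ):ℂ)^2*x^2 :=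
        fun k _ => aux_Lk ((sR k : ℝ):ℂ) u v x huv hx2
      have eM : (if Even m then ((((1+Real.sqrt 2)/2 : ℝ)):ℂ) + (((1-Real.sqrt 2)/2 : ℝ):ℂ)*u^2
            else 1)
          * (if Even m then ((((1+Real.sqrt 2)/2 : ℝ)):ℂ) + (((1-Real.sqrt 2)/2 : ℝ):ℂ)*v^2
            else 1)
          = (if Even m then 1 + x^2 else 1) := by
        have h2 : Real.sqrt 2 ^ 2 = 2 := Real.sq_sqrt (by norm_num)
        have h2c : ((Real.sqrt 2 : ℝ) : ℂ)^2 = 2 := by exact_mod_cast h2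
        split_ifs
        · refine aux_Lm' _ _ u v x ?_ ?_ huv hx2
          · push_cast
            linear_combination (-1/4 : ℂ) * h2c
          · push_cast
            linear_combination (1/2 : ℂ) * h2c
        · exact one_mul 1
      calc ((1/2 + 1/2*u^2)
            * (∏ k ∈ Finset.Ico 1 (h+1),
                (1/4 + ((sR k : ℝ):ℂ)*u + 1/2*u^2 - ((sR k : ℝ):ℂ)*u^3 + 1/4*u^4))
            * (if Even m then ((((1+Real.sqrt 2)/2 : ℝ)):ℂ)
                + (((1-Real.sqrt 2)/2 : ℝ):ℂ)*u^2 else 1))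
          * ((1/2 + 1/2*v^2)
            * (∏ k ∈ Finset.Ico 1 (h+1),
                (1/4 + ((sR k : ℝ):ℂ)*v + 1/2*v^2 - ((sR k : ℝ):ℂ)*v^3 + 1/4*v^4))
            * (if Even m then ((((1+Real.sqrt 2)/2 : ℝ)):ℂ)
                + (((1-Real.sqrt 2)/2 : ℝ):ℂ)*v^2 else 1))
          = ((1/2 + 1/2*u^2) * (1/2 + 1/2*v^2))
            * ((∏ k ∈ Finset.Ico 1 (h+1),
                (1/4 + ((sR k : ℝ):ℂ)*u + 1/2*u^2 - ((sR k : ℝ):ℂ)*u^3 + 1/4*u^4))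
              * ∏ k ∈ Finset.Ico 1 (h+1),
                (1/4 + ((sR k : ℝ):ℂ)*v + 1/2*v^2 - ((sR k : ℝ):ℂ)*v^3 + 1/4*v^4))
            * ((if Even m then ((((1+Real.sqrt 2)/2 : ℝ)):ℂ)
                + (((1-Real.sqrt 2)/2 : ℝ):ℂ)*u^2 else 1)
              * (if Even m then ((((1+Real.sqrt 2)/2 : ℝ)):ℂ)
                + (((1-Real.sqrt 2)/2 : ℝ):ℂ)*v^2 else 1)) := by ring
        _ = (1 - x^2) * ((∏ k ∈ Finset.Ico 1 (h+1), ((1-x^2)^2 + 4*((sR k : ℝ):ℂ)^2*x^2))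
              * (if Even m then 1 + x^2 else 1)) := by
            rw [e0, ← Finset.prod_mul_distrib, Finset.prod_congr rfl eG, eM]
            ring
        _ = ((1 - Real.sin t ^ (2*m) : ℝ) : ℂ) := by
            have h1 := aux_pair_factorization m hm x
            have h2 := aux_cos_factorization m hm x
            simp only [hsR]
            rw [hh, ← h1, h2]
            push_cast [hx]
            ring
    rw [Complex.sq_norm]
    rw [Complex.mul_conj] at hmain
    exact_mod_cast hmain
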